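/- arXiv:2312.06837 — 3 statements merged into one kernel-verified Lean document; each statement's English description precedes it below -/
import Mathlib

section
/- Let L ≥ 1 and let Z ∈ ℝ^{L×L} be the Hankel matrix with entries Z[i,j] = 2/((i+j)³ − (i+j)) for 1 ≤ i, j ≤ L. Then Z is symmetric and positive semidefinite, i.e. vᵀ Z v ≥ 0 for every v ∈ ℝ^L. -/
open scoped Matrix

lemma moment_eq (k : ℕ) :
    ∫ x in (0:ℝ)..1, x ^ k * (1 - x) ^ 2
      = 2 / (((k:ℝ) + 2) ^ 3 - ((k:ℝ) + 2)) := by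
  have h : (fun x : ℝ => x ^ k * (1 - x) ^ 2)
      = fun x : ℝ => x ^ k - 2 * x ^ (k+1) + x ^ (k+2) := by
    funext x; ring
  have i1 : IntervalIntegrable (fun x : ℝ => x ^ k) MeasureTheory.volume 0 1 :=
    (continuous_pow k).intervalIntegrable 0 1
  have i2 : IntervalIntegrable (fun x : ℝ => 2 * x ^ (k+1)) MeasureTheory.volume 0 1 :=
    (continuous_const.mul (continuous_pow (k+1))).intervalIntegrable 0 1
  have i3 : IntervalIntegrable (fun x : ℝ => x ^ (k+2)) MeasureTheory.volume 0 1 :=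
    (continuous_pow (k+2)).intervalIntegrable 0 1
  rw [h, intervalIntegral.integral_add (i1.sub i2) i3, intervalIntegral.integral_sub i1 i2,
    intervalIntegral.integral_const_mul, integral_pow, integral_pow, integral_pow]
  have hd : ((k:ℝ) + 2) ^ 3 - ((k:ℝ) + 2) = ((k:ℝ)+1)*(((k:ℝ)+2)*((k:ℝ)+3)) := by ring
  rw [hd]
  push_cast
  norm_num
  have h1 : ((k:ℝ) + 1) ≠ 0 := by positivity
  have h2 : ((k:ℝ) + 2) ≠ 0 := by positivity
  have h3 : ((k:ℝ) + 3) ≠ 0 := by positivity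
  field_simp
  ring

/-- The Hankel matrix `Z[i,j] = 2/((i+j)³ - (i+j))` (one-based indices)
is symmetric and positive semidefinite: `vᵀ Z v ≥ 0` for every `v ∈ ℝ^L`. -/
theorem spectral_hankel_symm_psd (L : ℕ) (hL : 1 ≤ L)
    (Z : Matrix (Fin L) (Fin L) ℝ)
    (hZ : ∀ i j : Fin L,
      Z i j = 2 / (((i:ℕ) + (j:ℕ) + 2 : ℝ) ^ 3 - ((i:ℕ) + (j:ℕ) + 2 : ℝ))) :
    Z.IsSymm ∧ ∀ v : Fin L → ℝ, 0 ≤ v ⬝ᵥ Z.mulVec v := by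
  constructor
  · ext i j
    rw [Matrix.transpose_apply, hZ i j, hZ j i]
    ring_nf
  · intro v
    have hint : ∀ (i j : Fin L), IntervalIntegrable
        (fun x : ℝ => v i * v j * (x ^ ((i:ℕ)+(j:ℕ)) * (1-x)^2)) MeasureTheory.volume 0 1 :=
      fun i j => (continuous_const.mul ((continuous_pow _).mul
        ((continuous_const.sub continuous_id).pow 2))).intervalIntegrable 0 1
    have swap : (∫ x in (0:ℝ)..1, ∑ i : Fin L, ∑ j : Fin L,
          v i * v j * (x ^ ((i:ℕ)+(j:ℕ)) * (1-x)^2))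
        = ∑ i : Fin L, ∑ j : Fin L,
            v i * v j * ∫ x in (0:ℝ)..1, x ^ ((i:ℕ)+(j:ℕ)) * (1-x)^2 := by
      refine (intervalIntegral.integral_finset_sum
        (f := fun (i : Fin L) (x : ℝ) => ∑ j : Fin L, v i * v j * (x ^ ((i:ℕ)+(j:ℕ)) * (1-x)^2))
        (fun i _ => (continuous_finset_sum _ (fun j _ => continuous_const.mul ((continuous_pow _).mul
          ((continuous_const.sub continuous_id).pow 2)))).intervalIntegrable 0 1)).trans ?_
      refine Finset.sum_congr rfl fun i _ => ?_
      refine (intervalIntegral.integral_finset_sum (fun j _ => hint i j)).trans ?_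
      exact Finset.sum_congr rfl fun j _ => intervalIntegral.integral_const_mul _ _
    have key : v ⬝ᵥ Z.mulVec v
        = ∫ x in (0:ℝ)..1, ((∑ i, v i * x ^ (i:ℕ)) * (1 - x)) ^ 2 := by
      have expand : ∀ x : ℝ, ((∑ i, v i * x ^ (i:ℕ)) * (1 - x)) ^ 2
          = ∑ i : Fin L, ∑ j : Fin L, v i * v j * (x ^ ((i:ℕ)+(j:ℕ)) * (1-x)^2) := by
        intro x
        rw [mul_pow, sq (∑ i, v i * x ^ (i:ℕ)), Finset.sum_mul_sum, Finset.sum_mul]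
        refine Finset.sum_congr rfl fun i _ => ?_
        rw [Finset.sum_mul]
        refine Finset.sum_congr rfl fun j _ => ?_
        rw [pow_add]; ring
      have congrInt : (∫ x in (0:ℝ)..1, ((∑ i, v i * x ^ (i:ℕ)) * (1 - x)) ^ 2)
          = ∫ x in (0:ℝ)..1, ∑ i : Fin L, ∑ j : Fin L,
              v i * v j * (x ^ ((i:ℕ)+(j:ℕ)) * (1-x)^2) :=
        intervalIntegral.integral_congr (fun x _ => expand x)
      rw [congrInt, swap]
      simp only [dotProduct, Matrix.mulVec, Finset.mul_sum]
      refine Finset.sum_congr rfl fun i _ => ?_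
      refine Finset.sum_congr rfl fun j _ => ?_
      rw [moment_eq ((i:ℕ)+(j:ℕ)), hZ i j]
      push_cast; ring
    rw [key]
    apply intervalIntegral.integral_nonneg (by norm_num)
    intro x _
    positivity
end

section
/- Let L ≥ 1, let μ(α) ∈ ℝ^L have entries μ(α)(i) = (α − 1)·α^{i−1}, and let v ∈ ℝ^L be a unit vector. Then the function f : [0,1] → ℝ defined by f(α) = (⟨μ(α), v⟩)² is 6-Lipschitz, i.e. |f(α) − f(β)| ≤ 6·|α − β| for all α, β ∈ [0,1]. -/
private lemma aux_geom (t : ℝ) (ht0 : 0 ≤ t) (ht1 : t ≤ 1) (n : ℕ) :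
    (1 - t) * ∑ i ∈ Finset.range n, t ^ i ≤ 1 := by
  have h := geom_sum_mul t n
  have hpow : 0 ≤ t ^ n := pow_nonneg ht0 n
  have : (1 - t) * ∑ i ∈ Finset.range n, t ^ i = 1 - t ^ n := by
    linear_combination -h
  linarith

private lemma aux_sum1 (t : ℝ) (n : ℕ) :
    (1 - t) * ∑ i ∈ Finset.range n, ((i : ℝ) + 1) * t ^ i =
      (∑ i ∈ Finset.range n, t ^ i) - n * t ^ n := by
  induction n with
  | zero => simp
  | succ m ih =>
    rw [Finset.sum_range_succ, Finset.sum_range_succ]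
    push_cast
    linear_combination ih

private lemma aux_sum1_le (t : ℝ) (ht0 : 0 ≤ t) (ht1 : t ≤ 1) (n : ℕ) :
    (1 - t) ^ 2 * ∑ i ∈ Finset.range n, ((i : ℝ) + 1) * t ^ i ≤ 1 := by
  have h1 := aux_sum1 t n
  have h2 := aux_geom t ht0 ht1 n
  have hpow : 0 ≤ (n : ℝ) * t ^ n := by positivity
  have ht : 0 ≤ 1 - t := by linarith
  calc (1 - t) ^ 2 * ∑ i ∈ Finset.range n, ((i : ℝ) + 1) * t ^ i
      = (1 - t) * ((1 - t) * ∑ i ∈ Finset.range n, ((i : ℝ) + 1) * t ^ i) := by ring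
    _ = (1 - t) * ((∑ i ∈ Finset.range n, t ^ i) - n * t ^ n) := by rw [h1]
    _ ≤ (1 - t) * ∑ i ∈ Finset.range n, t ^ i := by nlinarith
    _ ≤ 1 := h2

private lemma aux_b (t : ℝ) (ht0 : 0 ≤ t) (ht1 : t ≤ 1) (i : ℕ) :
    (i : ℝ) * t ^ (i - 1) * (1 - t) ≤ 1 := by
  have h1 : (i : ℝ) * t ^ (i - 1) ≤ ∑ j ∈ Finset.range i, t ^ j := by
    have : (i : ℝ) * t ^ (i - 1) = ∑ _j ∈ Finset.range i, t ^ (i - 1) := by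
      simp [mul_comm]
    rw [this]
    exact Finset.sum_le_sum fun j hj =>
      pow_le_pow_of_le_one ht0 ht1 (Nat.le_sub_one_of_lt (Finset.mem_range.mp hj))
  have h2 := aux_geom t ht0 ht1 i
  have ht : 0 ≤ 1 - t := by linarith
  nlinarith

/-- For a unit vector `v ∈ ℝ^L`, the function
`f(α) = (⟨μ(α), v⟩)²` is 6-Lipschitz on `[0,1]`. -/
theorem spectral_f_lipschitz (L : ℕ) (hL : 1 ≤ L)
    (μ : ℝ → Fin L → ℝ)
    (hμ : ∀ (α : ℝ) (i : Fin L), μ α i = (α - 1) * α ^ (i : ℕ))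
    (v : Fin L → ℝ) (hv : ∑ i, v i ^ 2 = 1)
    (f : ℝ → ℝ) (hf : ∀ α : ℝ, f α = (∑ i, μ α i * v i) ^ 2) :
    ∀ α ∈ Set.Icc (0:ℝ) 1, ∀ β ∈ Set.Icc (0:ℝ) 1,
      |f α - f β| ≤ 6 * |α - β| := by
  intro α hα β hβ
  -- g is the inner product, D its derivative
  set g : ℝ → ℝ := fun t => ∑ i : Fin L, ((t - 1) * t ^ (i : ℕ)) * v i with hg_def
  set D : ℝ → ℝ := fun t =>
    ∑ i : Fin L, (t ^ (i : ℕ) + (t - 1) * ((i : ℕ) * t ^ ((i : ℕ) - 1))) * v i with hD_def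
  have hfeq : ∀ t, f t = (g t) ^ 2 := by
    intro t
    rw [hf]
    congr 1
    exact Finset.sum_congr rfl fun i _ => by rw [hμ]
  have hg_deriv : ∀ t : ℝ, HasDerivAt g (D t) t := by
    intro t
    apply HasDerivAt.fun_sum
    intro i _
    have h1 : HasDerivAt (fun x : ℝ => (x - 1) * x ^ (i : ℕ))
        (1 * t ^ (i : ℕ) + (t - 1) * ((i : ℕ) * t ^ ((i : ℕ) - 1))) t :=
      ((hasDerivAt_id t).sub_const 1).mul (hasDerivAt_pow (i : ℕ) t)
    simpa using h1.mul_const (v i)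
  have hF_deriv : ∀ t : ℝ, HasDerivAt f (2 * g t ^ 1 * D t) t := by
    intro t
    have : HasDerivAt (fun t => (g t) ^ 2) ((2 : ℕ) * g t ^ (2 - 1) * D t) t :=
      (hg_deriv t).pow 2
    have hfe : f = fun t => (g t) ^ 2 := funext hfeq
    rw [hfe]
    simpa using this
  -- Bound on the derivative
  have bound : ∀ t ∈ Set.Icc (0:ℝ) 1, ‖2 * g t ^ 1 * D t‖ ≤ 6 := by
    intro t ht
    obtain ⟨ht0, ht1⟩ := ht
    have hmt : 0 ≤ 1 - t := by linarith
    set S : ℝ := ∑ i ∈ Finset.range L, (t ^ 2) ^ i with hS_def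
    set W : ℝ := ∑ i ∈ Finset.range L, (i : ℝ) * t ^ (i - 1) with hW_def
    have hS0 : 0 ≤ S := Finset.sum_nonneg fun i _ => by positivity
    have hW0 : 0 ≤ W := Finset.sum_nonneg fun i _ => by positivity
    -- (1-t) * S ≤ 1
    have hS1 : (1 - t) * S ≤ 1 := by
      have h1 := aux_geom (t ^ 2) (by positivity) (by nlinarith) L
      have h2 : 1 - t ≤ 1 - t ^ 2 := by nlinarith
      nlinarith
    -- (1-t)^2 * W ≤ 1
    have hW1 : (1 - t) ^ 2 * W ≤ 1 := by
      obtain ⟨m, rfl⟩ : ∃ m, L = m + 1 := ⟨L - 1, (Nat.succ_pred_eq_of_pos hL).symm⟩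
      have hW' : W = ∑ i ∈ Finset.range m, ((i : ℝ) + 1) * t ^ i := by
        rw [hW_def, Finset.sum_range_succ']
        simp [Nat.add_sub_cancel]
      rw [hW']
      exact aux_sum1_le t ht0 ht1 m
    -- Cauchy–Schwarz for g
    have hA : g t ^ 2 ≤ (1 - t) ^ 2 * S := by
      have hcs := Finset.sum_mul_sq_le_sq_mul_sq Finset.univ
        (fun i : Fin L => (t - 1) * t ^ (i : ℕ)) v
      have hsum : ∑ i : Fin L, ((t - 1) * t ^ (i : ℕ)) ^ 2 = (1 - t) ^ 2 * S := by
        rw [hS_def, ← Fin.sum_univ_eq_sum_range (fun i => (t ^ 2) ^ i), Finset.mul_sum]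
        exact Finset.sum_congr rfl fun i _ => by
          rw [mul_pow, ← pow_mul, ← pow_mul, mul_comm 2 (i : ℕ)]; ring
      calc g t ^ 2 ≤ (∑ i : Fin L, ((t - 1) * t ^ (i : ℕ)) ^ 2) * ∑ i, v i ^ 2 := hcs
        _ = (1 - t) ^ 2 * S := by rw [hv, hsum, mul_one]
    -- Cauchy–Schwarz for D
    have hB : D t ^ 2 ≤ S + (1 - t) * W := by
      have hcs := Finset.sum_mul_sq_le_sq_mul_sq Finset.univ
        (fun i : Fin L => t ^ (i : ℕ) + (t - 1) * ((i : ℕ) * t ^ ((i : ℕ) - 1))) v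
      have hsum : ∑ i : Fin L, (t ^ (i : ℕ) + (t - 1) * ((i : ℕ) * t ^ ((i : ℕ) - 1))) ^ 2
          ≤ S + (1 - t) * W := by
        rw [hS_def, hW_def, ← Fin.sum_univ_eq_sum_range (fun i => (t ^ 2) ^ i),
          ← Fin.sum_univ_eq_sum_range (fun i => (i : ℝ) * t ^ (i - 1)), Finset.mul_sum,
          ← Finset.sum_add_distrib]
        apply Finset.sum_le_sum
        intro i _
        have hb1 : (↑(i : ℕ) : ℝ) * t ^ ((i : ℕ) - 1) * (1 - t) ≤ 1 := aux_b t ht0 ht1 _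
        have hb0 : 0 ≤ (↑(i : ℕ) : ℝ) * t ^ ((i : ℕ) - 1) * (1 - t) := by positivity
        have hti : 0 ≤ t ^ (i : ℕ) := by positivity
        have hsq : (t ^ (i : ℕ)) ^ 2 = (t ^ 2) ^ (i : ℕ) := by
          rw [← pow_mul, ← pow_mul, mul_comm]
        nlinarith
      calc D t ^ 2
          ≤ (∑ i : Fin L, (t ^ (i : ℕ) + (t - 1) * ((i : ℕ) * t ^ ((i : ℕ) - 1))) ^ 2)
            * ∑ i, v i ^ 2 := hcs
        _ = ∑ i : Fin L, (t ^ (i : ℕ) + (t - 1) * ((i : ℕ) * t ^ ((i : ℕ) - 1))) ^ 2 := by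
            rw [hv, mul_one]
        _ ≤ S + (1 - t) * W := hsum
    -- combine
    have ha : 0 ≤ (1 - t) * S := mul_nonneg hmt hS0
    have hb : 0 ≤ (1 - t) ^ 2 * W := mul_nonneg (by positivity) hW0
    have h1 : ((1 - t) * S) * ((1 - t) * S) ≤ 1 := mul_le_one₀ hS1 ha hS1
    have h2 : ((1 - t) * S) * ((1 - t) ^ 2 * W) ≤ 1 := mul_le_one₀ hS1 hb hW1
    have h3 : g t ^ 2 * D t ^ 2 ≤ ((1 - t) ^ 2 * S) * (S + (1 - t) * W) :=
      mul_le_mul hA hB (sq_nonneg _) (by positivity)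
    have h4 : ((1 - t) ^ 2 * S) * (S + (1 - t) * W)
        = ((1 - t) * S) * ((1 - t) * S) + ((1 - t) * S) * ((1 - t) ^ 2 * W) := by ring
    have h5 : (2 * g t ^ 1 * D t) ^ 2 ≤ 36 := by nlinarith
    rw [Real.norm_eq_abs]
    nlinarith [sq_nonneg (2 * g t ^ 1 * D t - 6), sq_nonneg (2 * g t ^ 1 * D t + 6),
      abs_nonneg (2 * g t ^ 1 * D t), sq_abs (2 * g t ^ 1 * D t), le_abs_self (2 * g t ^ 1 * D t),
      neg_abs_le (2 * g t ^ 1 * D t)]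
  have := Convex.norm_image_sub_le_of_norm_hasDerivWithin_le
    (f := f) (f' := fun t => 2 * g t ^ 1 * D t) (s := Set.Icc (0:ℝ) 1)
    (fun x hx => (hF_deriv x).hasDerivWithinAt) bound (convex_Icc 0 1) hβ hα
  simpa [Real.norm_eq_abs, abs_sub_comm] using this
end

section
/- Let L ≥ 1, let μ̂(α) ∈ ℝ^L have entries μ̂(α)(i) = (α² − 1)·α^{i−1}, and let v ∈ ℝ^L be a unit vector. Then the function f : [−1,1] → ℝ defined by f(α) = (⟨μ̂(α), v⟩)² is 6-Lipschitz, i.e. |f(α) − f(β)| ≤ 6·|α − β| for all α, β ∈ [−1,1]. -/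
private lemma alt_key_aux (a b c X Y Z : ℝ) (ha : 0 ≤ a) (hb : 0 ≤ b) (hc : 0 ≤ c)
    (hX0 : 0 ≤ X) (hY0 : 0 ≤ Y) (hZ2 : Z ^ 2 = X * Y) (hab2 : a * b ≤ c ^ 2) :
    2 * (a * b) * Z ≤ (a * X + b * Y) * c := by
  have hR : 0 ≤ (a * X + b * Y) * c :=
    mul_nonneg (add_nonneg (mul_nonneg ha hX0) (mul_nonneg hb hY0)) hc
  rcases le_or_gt Z 0 with hZ | hZ
  · have : 2 * (a * b) * Z ≤ 0 := by
      have := mul_nonneg ha hb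
      nlinarith
    linarith
  · have hL0 : 0 ≤ 2 * (a * b) * Z := by positivity
    have e1 : 4 * (a * b * (X * Y)) ≤ (a * X + b * Y) ^ 2 := by
      nlinarith [sq_nonneg (a * X - b * Y)]
    have e2 : 4 * (a * b * (X * Y)) * (a * b) ≤ (a * X + b * Y) ^ 2 * c ^ 2 :=
      calc 4 * (a * b * (X * Y)) * (a * b) ≤ 4 * (a * b * (X * Y)) * c ^ 2 :=
            mul_le_mul_of_nonneg_left hab2 (by positivity)
        _ ≤ (a * X + b * Y) ^ 2 * c ^ 2 := mul_le_mul_of_nonneg_right e1 (sq_nonneg c)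
    have hsq : (2 * (a * b) * Z) ^ 2 ≤ ((a * X + b * Y) * c) ^ 2 := by
      have e0 : (2 * (a * b) * Z) ^ 2 = 4 * (a * b * (X * Y)) * (a * b) := by
        linear_combination (4 * a ^ 2 * b ^ 2) * hZ2
      calc (2 * (a * b) * Z) ^ 2 = 4 * (a * b * (X * Y)) * (a * b) := e0
        _ ≤ (a * X + b * Y) ^ 2 * c ^ 2 := e2
        _ = ((a * X + b * Y) * c) ^ 2 := by ring
    exact le_of_pow_le_pow_left₀ two_ne_zero hR hsq

set_option maxHeartbeats 1000000 in
/-- For a unit vector `v ∈ ℝ^L`, the function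
`f(α) = (⟨μ̂(α), v⟩)²` is 6-Lipschitz on `[-1,1]`. -/
theorem alt_f_lipschitz (L : ℕ) (hL : 1 ≤ L)
    (μ : ℝ → Fin L → ℝ)
    (hμ : ∀ (α : ℝ) (i : Fin L), μ α i = (α ^ 2 - 1) * α ^ (i : ℕ))
    (v : Fin L → ℝ) (hv : ∑ i, v i ^ 2 = 1)
    (f : ℝ → ℝ) (hf : ∀ α : ℝ, f α = (∑ i, μ α i * v i) ^ 2) :
    ∀ α ∈ Set.Icc (-1:ℝ) 1, ∀ β ∈ Set.Icc (-1:ℝ) 1,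
      |f α - f β| ≤ 6 * |α - β| := by
  intro α hα β hβ
  obtain ⟨hα1, hα2⟩ := hα
  obtain ⟨hβ1, hβ2⟩ := hβ
  have ht : α ^ 2 ≤ 1 := by nlinarith
  have hu : β ^ 2 ≤ 1 := by nlinarith
  have ht0 : (0:ℝ) ≤ α ^ 2 := sq_nonneg α
  have hu0 : (0:ℝ) ≤ β ^ 2 := sq_nonneg β
  have hs1 : α * β ≤ 1 := by nlinarith
  by_cases hcc : α * β = 1
  · have hab : α = β := by nlinarith [sq_nonneg (α - β)]
    rw [hab]
    simp only [sub_self, abs_zero]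
    positivity
  · have hc0 : 0 < 1 - α * β := by
      rcases lt_or_eq_of_le hs1 with h | h
      · linarith
      · exact absurd h hcc
    obtain ⟨X, hXdef⟩ : ∃ X : ℝ, X = (α ^ 2) ^ L := ⟨_, rfl⟩
    obtain ⟨Y, hYdef⟩ : ∃ Y : ℝ, Y = (β ^ 2) ^ L := ⟨_, rfl⟩
    obtain ⟨Z, hZdef⟩ : ∃ Z : ℝ, Z = (α * β) ^ L := ⟨_, rfl⟩
    have hX0 : 0 ≤ X := hXdef ▸ pow_nonneg ht0 L
    have hY0 : 0 ≤ Y := hYdef ▸ pow_nonneg hu0 L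
    have hX1 : X ≤ 1 := hXdef ▸ pow_le_one₀ ht0 ht
    have hY1 : Y ≤ 1 := hYdef ▸ pow_le_one₀ hu0 hu
    have hZ2 : Z ^ 2 = X * Y := by
      rw [hXdef, hYdef, hZdef, ← pow_mul, mul_comm L 2, pow_mul, mul_pow, ← mul_pow]
      ring_nf
    -- closed form sums
    have hA : ∑ i, μ α i ^ 2 = (α ^ 2 - 1) * (X - 1) := by
      have h1 : ∑ i, μ α i ^ 2 = (α ^ 2 - 1) ^ 2 * ∑ i ∈ Finset.range L, (α ^ 2) ^ i := by
        rw [← Fin.sum_univ_eq_sum_range (fun i => (α ^ 2) ^ i) L, Finset.mul_sum]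
        refine Finset.sum_congr rfl fun i _ => ?_
        rw [hμ, mul_pow, ← pow_mul, mul_comm (i : ℕ) 2, pow_mul]
      have h2 := geom_sum_mul (α ^ 2) L
      rw [h1, hXdef]
      nlinarith [h2]
    have hB : ∑ i, μ β i ^ 2 = (β ^ 2 - 1) * (Y - 1) := by
      have h1 : ∑ i, μ β i ^ 2 = (β ^ 2 - 1) ^ 2 * ∑ i ∈ Finset.range L, (β ^ 2) ^ i := by
        rw [← Fin.sum_univ_eq_sum_range (fun i => (β ^ 2) ^ i) L, Finset.mul_sum]
        refine Finset.sum_congr rfl fun i _ => ?_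
        rw [hμ, mul_pow, ← pow_mul, mul_comm (i : ℕ) 2, pow_mul]
      have h2 := geom_sum_mul (β ^ 2) L
      rw [h1, hYdef]
      nlinarith [h2]
    have hGs := geom_sum_mul (α * β) L
    have hC : ∑ i, μ α i * μ β i
        = (α ^ 2 - 1) * (β ^ 2 - 1) * ∑ i ∈ Finset.range L, (α * β) ^ i := by
      rw [← Fin.sum_univ_eq_sum_range (fun i => (α * β) ^ i) L, Finset.mul_sum]
      refine Finset.sum_congr rfl fun i _ => ?_
      rw [hμ, hμ, mul_pow]
      ring
    obtain ⟨DL, hDLdef⟩ : ∃ D : ℝ, D = ∑ i, (μ α i - μ β i) ^ 2 := ⟨_, rfl⟩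
    have hDL0 : 0 ≤ DL := hDLdef ▸ Finset.sum_nonneg fun i _ => sq_nonneg _
    have hD : DL = (∑ i, μ α i ^ 2) - 2 * (∑ i, μ α i * μ β i) + ∑ i, μ β i ^ 2 := by
      have he : ∀ i : Fin L, (μ α i - μ β i) ^ 2
          = μ α i ^ 2 - 2 * (μ α i * μ β i) + μ β i ^ 2 := fun i => by ring
      rw [hDLdef]
      simp_rw [he, Finset.sum_add_distrib, Finset.sum_sub_distrib, ← Finset.mul_sum]
    have hDc : DL * (1 - α * β)
        = ((α ^ 2 - 1) * (X - 1) + (β ^ 2 - 1) * (Y - 1)) * (1 - α * β)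
          - 2 * ((α ^ 2 - 1) * (β ^ 2 - 1)) * (1 - Z) := by
      rw [hD, hA, hB, hC, hZdef]
      linear_combination (2 * (α ^ 2 - 1) * (β ^ 2 - 1)) * hGs
    -- key correction inequality
    have hab2 : (1 - α ^ 2) * (1 - β ^ 2) ≤ (1 - α * β) ^ 2 := by
      have hr : (1 - α * β) ^ 2 - (1 - α ^ 2) * (1 - β ^ 2) = (α - β) ^ 2 := by ring
      have h2 := sq_nonneg (α - β)
      linarith
    have key : 2 * ((1 - α ^ 2) * (1 - β ^ 2)) * Z
        ≤ ((1 - α ^ 2) * X + (1 - β ^ 2) * Y) * (1 - α * β) :=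
      alt_key_aux (1 - α ^ 2) (1 - β ^ 2) (1 - α * β) X Y Z
        (by linarith) (by linarith) hc0.le hX0 hY0 hZ2 hab2
    have hid : ((α ^ 2 - 1) * (X - 1) + (β ^ 2 - 1) * (Y - 1)) * (1 - α * β)
          - 2 * ((α ^ 2 - 1) * (β ^ 2 - 1)) * (1 - Z)
        = (1 + α * β) * (α - β) ^ 2
          - (((1 - α ^ 2) * X + (1 - β ^ 2) * Y) * (1 - α * β)
            - 2 * ((1 - α ^ 2) * (1 - β ^ 2)) * Z) := by ring
    have h3 : DL * (1 - α * β) ≤ (1 + α * β) * (α - β) ^ 2 := by linarith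
    -- Cauchy-Schwarz bounds
    have hq1 : ((∑ i, μ α i * v i) - ∑ i, μ β i * v i) ^ 2 ≤ DL := by
      have heq : (∑ i, μ α i * v i) - ∑ i, μ β i * v i = ∑ i, (μ α i - μ β i) * v i := by
        rw [← Finset.sum_sub_distrib]
        exact Finset.sum_congr rfl fun i _ => by ring
      rw [heq]
      calc (∑ i, (μ α i - μ β i) * v i) ^ 2
          ≤ (∑ i, (μ α i - μ β i) ^ 2) * ∑ i, v i ^ 2 :=
            Finset.sum_mul_sq_le_sq_mul_sq _ _ _
        _ = DL := by rw [hv, hDLdef]; ring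
    have hgα : (∑ i, μ α i * v i) ^ 2 ≤ (α ^ 2 - 1) * (X - 1) := by
      calc (∑ i, μ α i * v i) ^ 2 ≤ (∑ i, μ α i ^ 2) * ∑ i, v i ^ 2 :=
            Finset.sum_mul_sq_le_sq_mul_sq _ _ _
        _ = (α ^ 2 - 1) * (X - 1) := by rw [hv, hA]; ring
    have hgβ : (∑ i, μ β i * v i) ^ 2 ≤ (β ^ 2 - 1) * (Y - 1) := by
      calc (∑ i, μ β i * v i) ^ 2 ≤ (∑ i, μ β i ^ 2) * ∑ i, v i ^ 2 :=
            Finset.sum_mul_sq_le_sq_mul_sq _ _ _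
        _ = (β ^ 2 - 1) * (Y - 1) := by rw [hv, hB]; ring
    have hAle : (α ^ 2 - 1) * (X - 1) ≤ 1 - α ^ 2 := by
      have h1 : (0:ℝ) ≤ (1 - α ^ 2) * X := mul_nonneg (by linarith) hX0
      have h2 : (α ^ 2 - 1) * (X - 1) - (1 - α ^ 2) = -((1 - α ^ 2) * X) := by ring
      linarith
    have hBle : (β ^ 2 - 1) * (Y - 1) ≤ 1 - β ^ 2 := by
      have h1 : (0:ℝ) ≤ (1 - β ^ 2) * Y := mul_nonneg (by linarith) hY0
      have h2 : (β ^ 2 - 1) * (Y - 1) - (1 - β ^ 2) = -((1 - β ^ 2) * Y) := by ring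
      linarith
    have hq2 : ((∑ i, μ α i * v i) + ∑ i, μ β i * v i) ^ 2 ≤ 4 * (1 - α * β) := by
      have hid2 : ((∑ i, μ α i * v i) + ∑ i, μ β i * v i) ^ 2
          = 2 * (∑ i, μ α i * v i) ^ 2 + 2 * (∑ i, μ β i * v i) ^ 2
            - ((∑ i, μ α i * v i) - ∑ i, μ β i * v i) ^ 2 := by ring
      have hd2 := sq_nonneg (α - β)
      have hsub := sq_nonneg ((∑ i, μ α i * v i) - ∑ i, μ β i * v i)
      have hd2' : 2 * (1 - α ^ 2) + 2 * (1 - β ^ 2) ≤ 4 * (1 - α * β) := by linarith [hd2]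
      linarith
    have hPP : f α - f β = ((∑ i, μ α i * v i) - ∑ i, μ β i * v i)
        * ((∑ i, μ α i * v i) + ∑ i, μ β i * v i) := by
      rw [hf, hf]; ring
    have h5 : (((∑ i, μ α i * v i) - ∑ i, μ β i * v i)
        * ((∑ i, μ α i * v i) + ∑ i, μ β i * v i)) ^ 2 ≤ DL * (4 * (1 - α * β)) := by
      rw [mul_pow]
      exact mul_le_mul hq1 hq2 (sq_nonneg _) hDL0
    have h7 : (1 + α * β) * (α - β) ^ 2 ≤ 2 * (α - β) ^ 2 := by
      nlinarith [mul_nonneg hc0.le (sq_nonneg (α - β))]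
    have h36 : (f α - f β) ^ 2 ≤ 36 * (α - β) ^ 2 := by
      rw [hPP]
      have hd2 := sq_nonneg (α - β)
      linarith [h5, h3, h7]
    have hfin : |f α - f β| ^ 2 ≤ (6 * |α - β|) ^ 2 := by
      rw [sq_abs]
      calc (f α - f β) ^ 2 ≤ 36 * (α - β) ^ 2 := h36
        _ = (6 * |α - β|) ^ 2 := by rw [mul_pow, sq_abs]; ring
    have h6 : (0:ℝ) ≤ 6 * |α - β| := by positivity
    exact abs_le_of_sq_le_sq' hfin h6 |>.2
end
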